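/- κ weakly Prospect-dominates λ if and only if E[v(κᵀX)] ≥ E[v(λᵀX)] for every S-shaped utility v in the class V of functions whose restriction to ℝ₋ is a convex mixture of negative ramp functions u ↦ max(u, z) (z ≤ 0) and whose restriction to ℝ₊ is a convex mixture of capped ramp functions u ↦ min(u, z) (z ≥ 0), with v(0) = 0. -/

import Mathlib

open MeasureTheory

variable {n : ℕ}

/-- cdf of the portfolio return `lᵀX` when `X ∼ μ`. -/
noncomputable def G (μ : Measure (Fin n → ℝ)) (l : Fin n → ℝ) (u : ℝ) : ℝ :=
  (μ {x | ∑ i, l i * x i ≤ u}).toReal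

/-- The class `V` of S-shaped utilities: on ℝ₋ a convex mixture of negative ramp
functions `u ↦ max(u,z)` (z ≤ 0), on ℝ₊ a convex mixture of capped ramp functions
`u ↦ min(u,z)` (z ≥ 0); such a `v` automatically satisfies `v 0 = 0`. -/
def InV (v : ℝ → ℝ) : Prop :=
  ∃ w₁ w₂ : Measure ℝ, IsProbabilityMeasure w₁ ∧ IsProbabilityMeasure w₂ ∧
    (∀ᵐ z ∂w₁, z ≤ 0) ∧ (∀ᵐ z ∂w₂, 0 ≤ z) ∧
    Integrable (fun z : ℝ => z) w₁ ∧ Integrable (fun z : ℝ => z) w₂ ∧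
    (∀ u : ℝ, u ≤ 0 → v u = ∫ z, max u z ∂w₁) ∧
    (∀ u : ℝ, 0 ≤ u → v u = ∫ z, min u z ∂w₂)

/-!
Every `v ∈ V` is the mixture `v y = ∫ max z (min y 0) dw₁(z) + ∫ max 0 (min y z) dw₂(z)` of the
clamps `y ↦ max a (min y b)` with `a ≤ 0 ≤ b`, and these clamps lie in `V` themselves (take Dirac
mixing measures). So dominance for all of `V` is dominance for the clamps, and by Fubini
`E[max a (min Y b)] = b - ∫_a^b P(Y ≤ u) du`, which turns clamp dominance into the integrated
cdf conditions.
-/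

open Set

theorem intervalIntegral_indicator_Ici {a b : ℝ} (hab : a ≤ b) (y : ℝ) :
    ∫ u in a..b, (Ici y).indicator 1 u = b - max a (min y b) := by
  have hae : (Ici y ∩ Ioc a b : Set ℝ) =ᵐ[volume] (Ioc a b ∩ Ioi y : Set ℝ) := by
    rw [inter_comm]
    exact (ae_eq_refl _).inter Ioi_ae_eq_Ici.symm
  rw [intervalIntegral.integral_of_le hab, integral_indicator_one measurableSet_Ici,
    measureReal_restrict_apply measurableSet_Ici, measureReal_congr hae,
    Ioc_inter_Ioi, Real.volume_real_Ioc]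
  rcases le_total y b with h | h <;> simp [h, hab]

theorem abs_max_min_le_abs_add_abs (a b y : ℝ) : |max a (min y b)| ≤ |a| + |b| :=
  abs_le.2 ⟨by linarith [le_max_left a (min y b), neg_abs_le a, abs_nonneg b],
    max_le (by linarith [le_abs_self a, abs_nonneg b])
      ((min_le_right y b).trans (by linarith [le_abs_self b, abs_nonneg a]))⟩

theorem abs_max_min_zero_le (y z : ℝ) : |max z (min y 0)| ≤ |z| := by
  rcases le_total z 0 with hz | hz
  · rw [abs_of_nonpos (max_le hz (min_le_right y 0)), abs_of_nonpos hz]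
    exact neg_le_neg (le_max_left z _)
  · rw [max_eq_left ((min_le_right y 0).trans hz)]

theorem abs_max_zero_min_le (y z : ℝ) : |max 0 (min y z)| ≤ |z| := by
  rcases le_total z 0 with hz | hz
  · rw [max_eq_left ((min_le_right y z).trans hz), abs_zero]
    exact abs_nonneg z
  · rw [abs_of_nonneg (le_max_left 0 _), abs_of_nonneg hz]
    exact max_le hz (min_le_right y z)

theorem inV_max_min {a b : ℝ} (ha : a ≤ 0) (hb : 0 ≤ b) : InV fun y => max a (min y b) :=
  ⟨.dirac a, .dirac b, inferInstance, inferInstance,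
    (ae_dirac_iff measurableSet_Iic).2 ha, (ae_dirac_iff measurableSet_Ici).2 hb,
    integrable_dirac enorm_lt_top, integrable_dirac enorm_lt_top,
    fun u hu => by dsimp only; rw [integral_dirac, min_eq_left (hu.trans hb), max_comm],
    fun u hu => by dsimp only; rw [integral_dirac, max_eq_right (ha.trans (le_min hu hb))]⟩

theorem eq_integral_max_min_add_integral_max_min {v : ℝ → ℝ} {w₁ w₂ : Measure ℝ}
    (hw₁ : ∀ᵐ z ∂w₁, z ≤ 0) (hw₂ : ∀ᵐ z ∂w₂, 0 ≤ z)
    (hv₁ : ∀ u, u ≤ 0 → v u = ∫ z, max u z ∂w₁) (hv₂ : ∀ u, 0 ≤ u → v u = ∫ z, min u z ∂w₂)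
    (y : ℝ) : v y = ∫ z, max z (min y 0) ∂w₁ + ∫ z, max 0 (min y z) ∂w₂ := by
  rcases le_total y 0 with hy | hy
  · have hpos : (fun z => max 0 (min y z)) =ᵐ[w₂] 0 :=
      hw₂.mono fun z _ => max_eq_left ((min_le_left y z).trans hy)
    simp_rw [hv₁ y hy, integral_eq_zero_of_ae hpos, add_zero, min_eq_left hy, max_comm]
  · have hneg : (fun z => max z (min y 0)) =ᵐ[w₁] 0 :=
      hw₁.mono fun z hz => by simp [min_eq_right hy, hz]
    rw [hv₂ y hy, integral_eq_zero_of_ae hneg, zero_add]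
    exact integral_congr_ae (hw₂.mono fun z hz => (max_eq_right (le_min hy hz)).symm)

section RandomVariable

variable {α : Type*} [MeasurableSpace α] {μ : Measure α}

theorem monotone_measureReal_setOf_le [IsFiniteMeasure μ] (Y : α → ℝ) :
    Monotone fun u => μ.real {x | Y x ≤ u} :=
  fun _ _ huv => measureReal_mono fun _ hx => le_trans hx huv

theorem integral_intervalIntegral_indicator_Ici [IsFiniteMeasure μ] {Y : α → ℝ}
    (hY : Measurable Y) {a b : ℝ} (hab : a ≤ b) :
    ∫ x, (∫ u in a..b, (Ici (Y x)).indicator 1 u) ∂μ = ∫ u in a..b, μ.real {x | Y x ≤ u} := by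
  have hS : MeasurableSet {p : α × ℝ | Y p.1 ≤ p.2} :=
    measurableSet_le (hY.comp measurable_fst) measurable_snd
  simp only [intervalIntegral.integral_of_le hab]
  rw [integral_integral_swap]
  · congr 1 with u
    exact integral_indicator_one (measurableSet_le hY measurable_const)
  · exact (integrable_const (1 : ℝ)).indicator hS

theorem integral_max_min_eq [IsProbabilityMeasure μ] {Y : α → ℝ} (hY : Measurable Y)
    {a b : ℝ} (hab : a ≤ b) :
    ∫ x, max a (min (Y x) b) ∂μ = b - ∫ u in a..b, μ.real {x | Y x ≤ u} := by
  have hclamp : Integrable (fun x => max a (min (Y x) b)) μ :=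
    .of_bound (by fun_prop) (|a| + |b|)
      (ae_of_all _ fun x => abs_max_min_le_abs_add_abs a b (Y x))
  simp_rw [← integral_intervalIntegral_indicator_Ici hY hab, intervalIntegral_indicator_Ici hab,
    integral_sub (integrable_const b) hclamp, integral_const, probReal_univ, one_smul,
    sub_sub_cancel]

theorem integral_max_min_le_integral_max_min_iff [IsProbabilityMeasure μ] {Y₁ Y₂ : α → ℝ}
    (hY₁ : Measurable Y₁) (hY₂ : Measurable Y₂) {a b : ℝ} (hab : a ≤ b) :
    ∫ x, max a (min (Y₁ x) b) ∂μ ≤ ∫ x, max a (min (Y₂ x) b) ∂μ ↔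
      ∫ u in a..b, (μ.real {x | Y₂ x ≤ u} - μ.real {x | Y₁ x ≤ u}) ≤ 0 := by
  rw [integral_max_min_eq hY₁ hab, integral_max_min_eq hY₂ hab, intervalIntegral.integral_sub
    (monotone_measureReal_setOf_le Y₂).intervalIntegrable
    (monotone_measureReal_setOf_le Y₁).intervalIntegrable]
  constructor <;> intro h <;> linarith

theorem integrable_uncurry_of_abs_le_abs [IsFiniteMeasure μ] {w : Measure ℝ} [SFinite w]
    (hw : Integrable (fun z : ℝ => z) w) {F : α → ℝ → ℝ} (hF : Measurable (Function.uncurry F))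
    (hFle : ∀ x z, |F x z| ≤ |z|) : Integrable (Function.uncurry F) (μ.prod w) :=
  (hw.abs.comp_snd μ).mono' hF.aestronglyMeasurable (ae_of_all _ fun p => hFle p.1 p.2)

theorem integrable_uncurry_max_min_zero [IsFiniteMeasure μ] {Y : α → ℝ} (hY : Measurable Y)
    {w : Measure ℝ} [SFinite w] (hw : Integrable (fun z : ℝ => z) w) :
    Integrable (Function.uncurry fun x z => max z (min (Y x) 0)) (μ.prod w) :=
  integrable_uncurry_of_abs_le_abs hw (by fun_prop) fun x z => abs_max_min_zero_le (Y x) z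

theorem integrable_uncurry_max_zero_min [IsFiniteMeasure μ] {Y : α → ℝ} (hY : Measurable Y)
    {w : Measure ℝ} [SFinite w] (hw : Integrable (fun z : ℝ => z) w) :
    Integrable (Function.uncurry fun x z => max 0 (min (Y x) z)) (μ.prod w) :=
  integrable_uncurry_of_abs_le_abs hw (by fun_prop) fun x z => abs_max_zero_min_le (Y x) z

theorem integral_comp_eq_integral_integral_max_min [IsFiniteMeasure μ] {Y : α → ℝ}
    (hY : Measurable Y) {v : ℝ → ℝ} {w₁ w₂ : Measure ℝ} [SFinite w₁] [SFinite w₂]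
    (hi₁ : Integrable (fun z : ℝ => z) w₁) (hi₂ : Integrable (fun z : ℝ => z) w₂)
    (hv : ∀ y, v y = ∫ z, max z (min y 0) ∂w₁ + ∫ z, max 0 (min y z) ∂w₂) :
    ∫ x, v (Y x) ∂μ =
      ∫ z, ∫ x, max z (min (Y x) 0) ∂μ ∂w₁ + ∫ z, ∫ x, max 0 (min (Y x) z) ∂μ ∂w₂ := by
  have h₁ := integrable_uncurry_max_min_zero (μ := μ) hY hi₁
  have h₂ := integrable_uncurry_max_zero_min (μ := μ) hY hi₂
  have hI₁ : Integrable (fun x => ∫ z, max z (min (Y x) 0) ∂w₁) μ := h₁.integral_prod_left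
  have hI₂ : Integrable (fun x => ∫ z, max 0 (min (Y x) z) ∂w₂) μ := h₂.integral_prod_left
  simp_rw [hv]
  rw [integral_add hI₁ hI₂, integral_integral_swap h₁, integral_integral_swap h₂]

/-- `ProspectLE μ Y₁ Y₂`: `Y₂` weakly Prospect-dominates `Y₁`. -/
def ProspectLE (μ : Measure α) (Y₁ Y₂ : α → ℝ) : Prop :=
  (∀ z : ℝ, z ≤ 0 → ∫ u in z..0, (μ.real {x | Y₂ x ≤ u} - μ.real {x | Y₁ x ≤ u}) ≤ 0) ∧
    ∀ z : ℝ, 0 < z → ∫ u in (0:ℝ)..z, (μ.real {x | Y₂ x ≤ u} - μ.real {x | Y₁ x ≤ u}) ≤ 0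

theorem prospectLE_iff_forall_inV [IsProbabilityMeasure μ] {Y₁ Y₂ : α → ℝ}
    (hY₁ : Measurable Y₁) (hY₂ : Measurable Y₂) :
    ProspectLE μ Y₁ Y₂ ↔ ∀ v, InV v → ∫ x, v (Y₁ x) ∂μ ≤ ∫ x, v (Y₂ x) ∂μ := by
  constructor
  · rintro ⟨hneg, hpos⟩ v ⟨w₁, w₂, _, _, hw₁, hw₂, hi₁, hi₂, hv₁, hv₂⟩
    have hv := eq_integral_max_min_add_integral_max_min hw₁ hw₂ hv₁ hv₂
    rw [integral_comp_eq_integral_integral_max_min hY₁ hi₁ hi₂ hv,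
      integral_comp_eq_integral_integral_max_min hY₂ hi₁ hi₂ hv]
    refine add_le_add
      (integral_mono_ae (integrable_uncurry_max_min_zero hY₁ hi₁).integral_prod_right
        (integrable_uncurry_max_min_zero hY₂ hi₁).integral_prod_right ?_)
      (integral_mono_ae (integrable_uncurry_max_zero_min hY₁ hi₂).integral_prod_right
        (integrable_uncurry_max_zero_min hY₂ hi₂).integral_prod_right ?_)
    · exact hw₁.mono fun z hz =>
        (integral_max_min_le_integral_max_min_iff hY₁ hY₂ hz).2 (hneg z hz)
    · refine hw₂.mono fun z hz => (integral_max_min_le_integral_max_min_iff hY₁ hY₂ hz).2 ?_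
      rcases hz.eq_or_lt with rfl | hz
      · simp
      · exact hpos z hz
  · intro h
    exact ⟨fun z hz => (integral_max_min_le_integral_max_min_iff hY₁ hY₂ hz).1
        (h _ (inV_max_min hz le_rfl)),
      fun z hz => (integral_max_min_le_integral_max_min_iff hY₁ hY₂ hz.le).1
        (h _ (inV_max_min le_rfl hz.le))⟩

end RandomVariable

theorem prospect_dominance_iff_expected_utility_general
    (μ : Measure (Fin n → ℝ)) [IsProbabilityMeasure μ]
    (l k : Fin n → ℝ) :
    ((∀ z : ℝ, z ≤ 0 → (∫ u in z..0, (G μ k u - G μ l u)) ≤ 0) ∧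
     (∀ z : ℝ, 0 < z → (∫ u in (0:ℝ)..z, (G μ k u - G μ l u)) ≤ 0)) ↔
    (∀ v : ℝ → ℝ, InV v →
      (∫ x, v (∑ i, l i * x i) ∂μ) ≤ ∫ x, v (∑ i, k i * x i) ∂μ) := by
  have h := prospectLE_iff_forall_inV (μ := μ) (Y₁ := fun x => ∑ i, l i * x i)
    (Y₂ := fun x => ∑ i, k i * x i) (by fun_prop) (by fun_prop)
  unfold ProspectLE at h
  simp only [G, ← measureReal_def]
  exact h

/-- κ weakly Prospect-dominates λ iff `E[v(κᵀX)] ≥ E[v(λᵀX)]` for every S-shaped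
utility `v` in the class `V`. -/
theorem prospect_dominance_iff_expected_utility
    (μ : Measure (Fin n → ℝ)) [IsProbabilityMeasure μ]
    (hbdd : ∃ C : ℝ, ∀ᵐ x ∂μ, ∀ i, |x i| ≤ C)
    (l k : Fin n → ℝ)
    (hl : l ∈ stdSimplex ℝ (Fin n)) (hk : k ∈ stdSimplex ℝ (Fin n)) :
    ((∀ z : ℝ, z ≤ 0 → (∫ u in z..0, (G μ k u - G μ l u)) ≤ 0) ∧
     (∀ z : ℝ, 0 < z → (∫ u in (0:ℝ)..z, (G μ k u - G μ l u)) ≤ 0)) ↔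
    (∀ v : ℝ → ℝ, InV v →
      (∫ x, v (∑ i, l i * x i) ∂μ) ≤ ∫ x, v (∑ i, k i * x i) ∂μ) :=
  prospect_dominance_iff_expected_utility_general μ l k
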